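/- There exists an MDP M = (L, μ0, Σ, δ) and a blind strategy α such that M with strategy α is strongly synchronizing, but for every blind memoryless strategy β (i.e., a strategy assigning the same probability distribution on Σ to every history), M with strategy β is not strongly synchronizing. (Hence memory is necessary for blind strategies for synchronizing objectives.) -/
import Mathlib


open Filter

namespace SyncMDP

/-- A history: an initial state followed by a list of (action, state) steps. -/
structure Hist (L A : Type) where
  start : L
  steps : List (A × L)
deriving DecidableEq

variable {L A : Type}

/-- The last state of a history. -/
def Hist.last (h : Hist L A) : L := h.steps.foldl (fun _ p => p.2) h.start

/-- The length of a history. -/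
def Hist.len (h : Hist L A) : ℕ := h.steps.length

/-- Extending a history by one action and one state. -/
def Hist.extend (h : Hist L A) (a : A) (l : L) : Hist L A := ⟨h.start, h.steps ++ [(a, l)]⟩

/-- A probability distribution on a finite type. -/
def IsDist {S : Type} [Fintype S] (d : S → ℝ) : Prop :=
  (∀ s, 0 ≤ d s) ∧ ∑ s, d s = 1

/-- A probabilistic transition function. -/
def IsTrans [Fintype L] (δ : L → A → L → ℝ) : Prop := ∀ l a, IsDist (δ l a)

/-- A (randomized) strategy assigns a distribution over actions to every history. -/
def IsStrategy [Fintype A] (α : Hist L A → A → ℝ) : Prop :=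
  ∀ h : Hist L A, (∀ a, 0 ≤ α h a) ∧ ∑ a, α h a = 1

/-- A pure strategy plays one action with probability one after every history. -/
def PureStrat (α : Hist L A → A → ℝ) : Prop := ∀ h, ∃ a, α h a = 1

/-- A blind strategy only depends on the length of the history. -/
def BlindStrat (α : Hist L A → A → ℝ) : Prop :=
  ∀ h₁ h₂ : Hist L A, h₁.len = h₂.len → α h₁ = α h₂

/-- A memoryless strategy only depends on the last state of the history. -/
def Memoryless (α : Hist L A → A → ℝ) : Prop :=
  ∀ h₁ h₂ : Hist L A, h₁.last = h₂.last → α h₁ = α h₂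

/-- Auxiliary product for the probability of a history: the first argument is the current
state, the second the history (prefix) read so far, the third the remaining steps. -/
def prAux (δ : L → A → L → ℝ) (α : Hist L A → A → ℝ) : L → Hist L A → List (A × L) → ℝ
  | _, _, [] => 1
  | cur, pre, (a, l) :: rest => α pre a * δ cur a l * prAux δ α l (pre.extend a l) rest

/-- The probability `Pr^α(h)` of a history `h`. -/
def pr (μ0 : L → ℝ) (δ : L → A → L → ℝ) (α : Hist L A → A → ℝ) (h : Hist L A) : ℝ :=
  μ0 h.start * prAux δ α h.start ⟨h.start, []⟩ h.steps

variable (L A) in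
/-- The finite set of all histories of length `n`. -/
def hists [Fintype L] [DecidableEq L] [Fintype A] [DecidableEq A] : ℕ → Finset (Hist L A)
  | 0 => Finset.univ.image fun l : L => ⟨l, []⟩
  | n + 1 => (hists n).biUnion fun h => Finset.univ.image fun p : A × L => h.extend p.1 p.2

variable [Fintype L] [DecidableEq L] [Fintype A] [DecidableEq A]

/-- The outcome `X_n^α` : the distribution over states at step `n` under strategy `α`. -/
noncomputable def outcome (μ0 : L → ℝ) (δ : L → A → L → ℝ) (α : Hist L A → A → ℝ)
    (n : ℕ) (l : L) : ℝ :=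
  ∑ h ∈ (hists L A n).filter (fun h => h.last = l), pr μ0 δ α h

/-- The norm `‖X‖ = max_{ℓ ∈ L} X(ℓ)` of a distribution on a (nonempty) finite type. -/
noncomputable def dnorm (X : L → ℝ) : ℝ := ⨆ l, X l

/-- Strongly synchronizing: `liminf_n ‖X_n^α‖ = 1`. -/
def StronglySync (μ0 : L → ℝ) (δ : L → A → L → ℝ) (α : Hist L A → A → ℝ) : Prop :=
  liminf (fun n => dnorm (outcome μ0 δ α n)) atTop = 1

/-- Weakly synchronizing: `limsup_n ‖X_n^α‖ = 1`. -/
def WeaklySync (μ0 : L → ℝ) (δ : L → A → L → ℝ) (α : Hist L A → A → ℝ) : Prop :=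
  limsup (fun n => dnorm (outcome μ0 δ α n)) atTop = 1

open Classical in
/-- `Post_σ(ℓ)`: the support of `δ(ℓ,σ)`. -/
noncomputable def post (δ : L → A → L → ℝ) (l : L) (a : A) : Finset L :=
  Finset.univ.filter fun l' => 0 < δ l a l'

/-- Transition function of the perfect-information subset construction. -/
noncomputable def deltaP (δ : L → A → L → ℝ) (s : Finset L) (f : L → A) : Finset L :=
  s.biUnion fun l => post δ l (f l)

/-- Transition function of the blind subset construction. -/
noncomputable def deltaB (δ : L → A → L → ℝ) (s : Finset L) (a : A) : Finset L :=
  s.biUnion fun l => post δ l a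

open Classical in
/-- The initial cell: the support of `μ0`. -/
noncomputable def initCell (μ0 : L → ℝ) : Finset L :=
  Finset.univ.filter fun l => 0 < μ0 l

/-- Reachability of a cell from the initial cell in the perfect-information
subset construction. -/
def ReachP (μ0 : L → ℝ) (δ : L → A → L → ℝ) (s : Finset L) : Prop :=
  Relation.ReflTransGen (fun t t' => ∃ f : L → A, deltaP δ t f = t') (initCell μ0) s

/-- Reachability of a cell from the initial cell in the blind subset construction. -/
def ReachB (μ0 : L → ℝ) (δ : L → A → L → ℝ) (s : Finset L) : Prop :=
  Relation.ReflTransGen (fun t t' => ∃ a : A, deltaB δ t a = t') (initCell μ0) s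

/-- Cyclic successor on `Fin d`. -/
def cyc {d : ℕ} (hd : 0 < d) (i : Fin d) : Fin d := ⟨((i : ℕ) + 1) % d, Nat.mod_lt _ hd⟩

/-- A recurrent cyclic set for the cycle `(s, act)` of length `d` of the
perfect-information subset construction. -/
def IsRCSP {d : ℕ} (hd : 0 < d) (δ : L → A → L → ℝ) (s : Fin d → Finset L)
    (act : Fin d → L → A) (g : Fin d → Finset L) : Prop :=
  ∀ i : Fin d, (g i).Nonempty ∧ g i ⊆ s i ∧
    (g i).biUnion (fun l => post δ l (act i l)) = g (cyc hd i)

/-- A minimal recurrent cyclic set (perfect-information). -/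
def IsMinRCSP {d : ℕ} (hd : 0 < d) (δ : L → A → L → ℝ) (s : Fin d → Finset L)
    (act : Fin d → L → A) (g : Fin d → Finset L) : Prop :=
  IsRCSP hd δ s act g ∧
    ∀ g' : Fin d → Finset L, IsRCSP hd δ s act g' → (∀ i, g' i ⊆ g i) → g' = g

/-- A recurrent cyclic set for the cycle `(s, act)` of length `d` of the blind
subset construction. -/
def IsRCSB {d : ℕ} (hd : 0 < d) (δ : L → A → L → ℝ) (s : Fin d → Finset L)
    (act : Fin d → A) (g : Fin d → Finset L) : Prop :=
  ∀ i : Fin d, (g i).Nonempty ∧ g i ⊆ s i ∧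
    (g i).biUnion (fun l => post δ l (act i)) = g (cyc hd i)

/-- A minimal recurrent cyclic set (blind). -/
def IsMinRCSB {d : ℕ} (hd : 0 < d) (δ : L → A → L → ℝ) (s : Fin d → Finset L)
    (act : Fin d → A) (g : Fin d → Finset L) : Prop :=
  IsRCSB hd δ s act g ∧
    ∀ g' : Fin d → Finset L, IsRCSB hd δ s act g' → (∀ i, g' i ⊆ g i) → g' = g


-- auxiliary lemmas

lemma prAux_append (δ : L → A → L → ℝ) (α : Hist L A → A → ℝ) (a : A) (l : L) :
    ∀ (steps : List (A × L)) (cur : L) (pre : Hist L A),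
      prAux δ α cur pre (steps ++ [(a, l)]) =
        prAux δ α cur pre steps * α ⟨pre.start, pre.steps ++ steps⟩ a *
          δ (steps.foldl (fun _ p => p.2) cur) a l
  | [], cur, pre => by simp [prAux]
  | (b, m) :: rest, cur, pre => by
    show α pre b * δ cur b m * prAux δ α m (pre.extend b m) (rest ++ [(a, l)]) = _
    rw [prAux_append δ α a l rest m (pre.extend b m)]
    simp only [prAux, Hist.extend, List.foldl_cons, List.append_assoc, List.singleton_append]
    ring

lemma pr_extend (μ0 : L → ℝ) (δ : L → A → L → ℝ) (α : Hist L A → A → ℝ)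
    (h : Hist L A) (a : A) (l : L) :
    pr μ0 δ α (h.extend a l) = pr μ0 δ α h * α h a * δ h.last a l := by
  obtain ⟨s, steps⟩ := h
  simp only [pr, Hist.extend, Hist.last, prAux_append, List.nil_append]
  ring

lemma extend_inj {h₁ h₂ : Hist L A} {a₁ a₂ : A} {l₁ l₂ : L}
    (h : h₁.extend a₁ l₁ = h₂.extend a₂ l₂) : h₁ = h₂ ∧ a₁ = a₂ ∧ l₁ = l₂ := by
  obtain ⟨s₁, st₁⟩ := h₁; obtain ⟨s₂, st₂⟩ := h₂
  simp only [Hist.extend, Hist.mk.injEq] at h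
  obtain ⟨hs, hst⟩ := h
  obtain ⟨h1, h2⟩ := List.append_inj' hst rfl
  simp only [List.cons.injEq, Prod.mk.injEq] at h2
  exact ⟨by simp [hs, h1], h2.1.1, h2.1.2⟩

lemma last_extend (h : Hist L A) (a : A) (l : L) : (h.extend a l).last = l := by
  simp [Hist.last, Hist.extend, List.foldl_append]

lemma outcome_zero (μ0 : L → ℝ) (δ : L → A → L → ℝ) (α : Hist L A → A → ℝ) (l : L) :
    outcome μ0 δ α 0 l = μ0 l := by
  rw [outcome, Finset.sum_filter, hists,
    Finset.sum_image (by intro a _ b _ hab; simpa using congrArg Hist.start hab)]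
  simp [Hist.last, pr, prAux]

lemma hists_len (n : ℕ) (h : Hist L A) (hh : h ∈ hists L A n) : h.len = n := by
  induction n generalizing h with
  | zero =>
    rw [hists] at hh
    obtain ⟨l, -, rfl⟩ := Finset.mem_image.mp hh
    rfl
  | succ n ih =>
    rw [hists] at hh
    obtain ⟨h', hh', hmem⟩ := Finset.mem_biUnion.mp hh
    obtain ⟨p, -, rfl⟩ := Finset.mem_image.mp hmem
    simp only [Hist.extend, Hist.len, List.length_append, List.length_cons, List.length_nil]
    rw [show h'.steps.length = h'.len from rfl, ih h' hh']

lemma outcome_succ (μ0 : L → ℝ) (δ : L → A → L → ℝ) (α : Hist L A → A → ℝ)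
    (c : ℕ → A → ℝ) (hc : ∀ h : Hist L A, α h = c h.len) (n : ℕ) (l : L) :
    outcome μ0 δ α (n + 1) l = ∑ l', outcome μ0 δ α n l' * ∑ a, c n a * δ l' a l := by
  have hdisj : (↑(hists L A n) : Set (Hist L A)).PairwiseDisjoint
      (fun h => (Finset.univ.image fun p : A × L => h.extend p.1 p.2)) := by
    intro h₁ _ h₂ _ hne
    simp only [Finset.disjoint_left, Finset.mem_image]
    rintro x ⟨p, -, rfl⟩ ⟨q, -, hq⟩
    exact hne (extend_inj hq).1.symm
  rw [outcome, Finset.sum_filter, hists, Finset.sum_biUnion hdisj]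
  have step1 : ∀ h ∈ hists L A n,
      (∑ x ∈ Finset.univ.image fun p : A × L => h.extend p.1 p.2,
        if x.last = l then pr μ0 δ α x else 0)
      = pr μ0 δ α h * ∑ a, c n a * δ h.last a l := by
    intro h hh
    rw [Finset.sum_image (fun a _ b _ hab =>
      Prod.ext_iff.mpr ⟨(extend_inj hab).2.1, (extend_inj hab).2.2⟩)]
    rw [Fintype.sum_prod_type]
    simp only [last_extend]
    have : ∀ a : A, (∑ l' : L, if l' = l then pr μ0 δ α (h.extend a l') else 0)
        = pr μ0 δ α h * (c n a * δ h.last a l) := by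
      intro a
      rw [Finset.sum_ite_eq' Finset.univ l (fun l' => pr μ0 δ α (h.extend a l'))]
      simp [pr_extend, hc h, hists_len n h hh]
      ring
    rw [Finset.sum_congr rfl fun a _ => this a, ← Finset.mul_sum]
  rw [Finset.sum_congr rfl step1]
  rw [← Finset.sum_fiberwise (hists L A n) Hist.last
    (fun h => pr μ0 δ α h * ∑ a, c n a * δ h.last a l)]
  refine Finset.sum_congr rfl fun l' _ => ?_
  rw [outcome, Finset.sum_mul]
  refine Finset.sum_congr rfl fun h hh => ?_
  rw [(Finset.mem_filter.mp hh).2]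

namespace Example3

noncomputable def mu : Fin 3 → ℝ := fun l => if l = 2 then 0 else 1/2

noncomputable def dl : Fin 3 → Fin 2 → Fin 3 → ℝ := fun l a l' =>
  if l = 0 then (if a = 0 then (if l' = 0 then 1 else 0) else (if l' = 1 then 1 else 0))
  else if l = 1 then (if l' = 2 then 1 else 0)
  else (if l' = 1 then 1 else 0)

lemma mu_dist : IsDist mu := by
  constructor
  · intro s; fin_cases s <;> simp [mu] <;> norm_num
  · simp [Fin.sum_univ_three, mu]; norm_num

lemma dl_trans : IsTrans dl := by
  intro l a
  constructor
  · intro s; fin_cases l <;> fin_cases a <;> fin_cases s <;> simp [dl] <;> split_ifs <;> norm_num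
  · fin_cases l <;> fin_cases a <;> simp [Fin.sum_univ_three, dl]

lemma step3 (α : Hist (Fin 3) (Fin 2) → Fin 2 → ℝ) (c : ℕ → Fin 2 → ℝ)
    (hc : ∀ h, α h = c h.len) (hsum : ∀ n, c n 0 + c n 1 = 1) (n : ℕ) :
    outcome mu dl α (n+1) 0 = outcome mu dl α n 0 * c n 0 ∧
    outcome mu dl α (n+1) 1 = outcome mu dl α n 0 * c n 1 + outcome mu dl α n 2 ∧
    outcome mu dl α (n+1) 2 = outcome mu dl α n 1 := by
  refine ⟨?_, ?_, ?_⟩ <;> rw [outcome_succ mu dl α c hc n] <;>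
      simp [Fin.sum_univ_three, Fin.sum_univ_two, dl] <;>
    first
      | linear_combination (outcome mu dl α n 1) * (hsum n)
      | linear_combination (outcome mu dl α n 2) * (hsum n)


lemma dnorm_le' {X : Fin 3 → ℝ} {b : ℝ} (h : ∀ l, X l ≤ b) : dnorm X ≤ b := ciSup_le h

lemma le_dnorm (X : Fin 3 → ℝ) (l : Fin 3) : X l ≤ dnorm X :=
  le_ciSup (Set.Finite.bddAbove (Set.finite_range X)) l

lemma dnorm_eq_one {X : Fin 3 → ℝ} (hle : ∀ l, X l ≤ 1) (l0 : Fin 3) (h1 : X l0 = 1) :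
    dnorm X = 1 :=
  le_antisymm (ciSup_le hle) (h1 ▸ le_dnorm X l0)

noncomputable def cgood : ℕ → Fin 2 → ℝ := fun n a =>
  if n = 1 then (if a = 1 then 1 else 0) else (if a = 0 then 1 else 0)

noncomputable def agood : Hist (Fin 3) (Fin 2) → Fin 2 → ℝ := fun h => cgood h.len

lemma cgood_sum (n : ℕ) : cgood n 0 + cgood n 1 = 1 := by
  by_cases h : n = 1 <;> simp [cgood, h]

lemma agood_strategy : IsStrategy agood := by
  intro h
  constructor
  · intro a; unfold agood cgood; split_ifs <;> norm_num
  · rw [Fin.sum_univ_two]; exact cgood_sum h.len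

lemma agood_blind : BlindStrat agood := fun h₁ h₂ hl => by simp [agood, hl]

lemma agood_sync : StronglySync mu dl agood := by
  set X := outcome mu dl agood with hX
  have hstep : ∀ n : ℕ, X (n+1) 0 = X n 0 * cgood n 0 ∧
      X (n+1) 1 = X n 0 * cgood n 1 + X n 2 ∧ X (n+1) 2 = X n 1 :=
    step3 agood cgood (fun h => rfl) cgood_sum
  have e00 : X 0 0 = 1/2 := by rw [hX, outcome_zero]; simp [mu]
  have e01 : X 0 1 = 1/2 := by rw [hX, outcome_zero]; simp [mu]
  have e02 : X 0 2 = 0 := by rw [hX, outcome_zero]; simp [mu]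
  have e10 : X 1 0 = 1/2 := by
    show X (0+1) 0 = 1/2; rw [(hstep 0).1, e00]; simp [cgood]
  have e11 : X 1 1 = 0 := by
    show X (0+1) 1 = 0; rw [(hstep 0).2.1, e00, e02]; simp [cgood]
  have e12 : X 1 2 = 1/2 := by
    show X (0+1) 2 = 1/2; rw [(hstep 0).2.2, e01]
  have e20 : X 2 0 = 0 := by
    show X (1+1) 0 = 0; rw [(hstep 1).1, e10]; simp [cgood]
  have e21 : X 2 1 = 1 := by
    show X (1+1) 1 = 1; rw [(hstep 1).2.1, e10, e12]; simp [cgood]; norm_num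
  have e22 : X 2 2 = 0 := by
    show X (1+1) 2 = 0; rw [(hstep 1).2.2, e11]
  have key : ∀ k : ℕ, X (k+2) 0 = 0 ∧
      ((X (k+2) 1 = 1 ∧ X (k+2) 2 = 0) ∨ (X (k+2) 1 = 0 ∧ X (k+2) 2 = 1)) := by
    intro k
    induction k with
    | zero => exact ⟨e20, Or.inl ⟨e21, e22⟩⟩
    | succ k ih =>
      obtain ⟨hz, hc⟩ := ih
      have hc0 : cgood (k + 2) 0 = 1 := by simp [cgood]
      have hc1 : cgood (k + 2) 1 = 0 := by simp [cgood]
      have g0 : X (k+1+2) 0 = 0 := by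
        rw [show k+1+2 = (k+2)+1 by ring, (hstep (k+2)).1, hz]; ring
      have g1 : X (k+1+2) 1 = X (k+2) 2 := by
        rw [show k+1+2 = (k+2)+1 by ring, (hstep (k+2)).2.1, hz, hc1]; ring
      have g2 : X (k+1+2) 2 = X (k+2) 1 := by
        rw [show k+1+2 = (k+2)+1 by ring, (hstep (k+2)).2.2]
      refine ⟨g0, ?_⟩
      rcases hc with ⟨h1, h2⟩ | ⟨h1, h2⟩
      · exact Or.inr ⟨by rw [g1, h2], by rw [g2, h1]⟩
      · exact Or.inl ⟨by rw [g1, h2], by rw [g2, h1]⟩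
  have ev : ∀ᶠ n in atTop, dnorm (X n) = (1:ℝ) := by
    rw [eventually_atTop]
    refine ⟨2, fun n hn => ?_⟩
    obtain ⟨k, rfl⟩ : ∃ k, n = k + 2 := ⟨n - 2, by omega⟩
    obtain ⟨hz, hc⟩ := key k
    rcases hc with ⟨h1, h2⟩ | ⟨h1, h2⟩
    · exact dnorm_eq_one (fun l => by fin_cases l <;> simp [hz, h1, h2]) 1 h1
    · exact dnorm_eq_one (fun l => by fin_cases l <;> simp [hz, h1, h2]) 2 h2
  rw [StronglySync, liminf_congr ev, liminf_const]

lemma no_const (β : Hist (Fin 3) (Fin 2) → Fin 2 → ℝ) (hβ : IsStrategy β)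
    (hconst : ∀ h₁ h₂, β h₁ = β h₂) : ¬ StronglySync mu dl β := by
  set d : Fin 2 → ℝ := β ⟨0, []⟩ with hd
  set q : ℝ := d 0 with hqd
  set p : ℝ := d 1 with hpd
  have hc : ∀ h : Hist (Fin 3) (Fin 2), β h = (fun _ : ℕ => d) h.len := fun h => hconst h _
  have hsum1 : q + p = 1 := by
    have := (hβ ⟨0, []⟩).2
    rwa [Fin.sum_univ_two] at this
  have hq0 : (0:ℝ) ≤ q := (hβ _).1 0
  have hp0 : (0:ℝ) ≤ p := (hβ _).1 1
  have hq1 : q ≤ 1 := by linarith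
  have h1q : (0:ℝ) < 1 + q := by linarith
  set X := outcome mu dl β with hX
  have hstep : ∀ n : ℕ, X (n+1) 0 = X n 0 * q ∧
      X (n+1) 1 = X n 0 * p + X n 2 ∧ X (n+1) 2 = X n 1 :=
    step3 β (fun _ => d) hc (fun n => hsum1)
  have inv : ∀ n, 0 ≤ X n 0 ∧ X n 0 ≤ 1/2 ∧ X n 1 + q * X n 0 / (1+q) ≤ 3/4 ∧
      X n 2 + X n 0 / (1+q) ≤ 3/4 := by
    intro n
    induction n with
    | zero =>
      have e0 : X 0 0 = 1/2 := by rw [hX, outcome_zero]; simp [mu]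
      have e1 : X 0 1 = 1/2 := by rw [hX, outcome_zero]; simp [mu]
      have e2 : X 0 2 = 0 := by rw [hX, outcome_zero]; simp [mu]
      rw [e0, e1, e2]
      refine ⟨by norm_num, le_refl _, ?_, ?_⟩
      · have : q * (1/2) / (1+q) ≤ 1/4 := by rw [div_le_iff₀ h1q]; nlinarith
        linarith
      · have : (1/2:ℝ) / (1+q) ≤ 3/4 := by rw [div_le_iff₀ h1q]; nlinarith
        linarith
    | succ n ih =>
      obtain ⟨i0, i1, i2, i3⟩ := ih
      obtain ⟨g0, g1, g2⟩ := hstep n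
      rw [g0, g1, g2]
      have hpq : p = 1 - q := by linarith
      refine ⟨mul_nonneg i0 hq0, by nlinarith, ?_, ?_⟩
      · have id1 : X n 0 * p + q * (X n 0 * q) / (1+q) = X n 0 / (1+q) := by
          rw [hpq]; field_simp; ring
        linarith
      · have id2 : X n 0 * q = q * X n 0 := mul_comm _ _
        have : X n 1 + X n 0 * q / (1+q) = X n 1 + q * X n 0 / (1+q) := by rw [id2]
        linarith
  intro hsync
  have hub : ∀ n, dnorm (X n) ≤ 3/4 := by
    intro n
    obtain ⟨i0, i1, i2, i3⟩ := inv n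
    have hn1 : (0:ℝ) ≤ q * X n 0 / (1+q) := div_nonneg (mul_nonneg hq0 i0) (le_of_lt h1q)
    have hn2 : (0:ℝ) ≤ X n 0 / (1+q) := div_nonneg i0 (le_of_lt h1q)
    refine dnorm_le' fun l => ?_
    fin_cases l
    · show X n 0 ≤ 3/4; linarith
    · show X n 1 ≤ 3/4; linarith
    · show X n 2 ≤ 3/4; linarith
  have hlb : ∀ n, (0:ℝ) ≤ dnorm (X n) := fun n => le_trans (inv n).1 (le_dnorm _ 0)
  have hle : liminf (fun n => dnorm (X n)) atTop ≤ 3/4 := by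
    have h1 : liminf (fun n => dnorm (X n)) atTop ≤ liminf (fun _ : ℕ => (3/4:ℝ)) atTop := by
      refine liminf_le_liminf (Eventually.of_forall hub) ?_ ?_
      · exact Filter.isBoundedUnder_of ⟨0, hlb⟩
      · exact Filter.isCoboundedUnder_ge_of_le atTop (fun _ => le_refl (3/4:ℝ))
    rwa [liminf_const] at h1
  rw [StronglySync] at hsync
  rw [hsync] at hle
  norm_num at hle

end Example3

/-- There is an MDP (with finite state space `Fin n` and finite action
alphabet `Fin m`) and a blind strategy `α` that is strongly synchronizing, while no blind
memoryless strategy (i.e. a strategy constant on all histories) is strongly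
synchronizing. -/
theorem blind_memory_necessary :
    ∃ (n m : ℕ) (μ0 : Fin n → ℝ) (δ : Fin n → Fin m → Fin n → ℝ),
      IsDist μ0 ∧ IsTrans δ ∧
      (∃ α : Hist (Fin n) (Fin m) → Fin m → ℝ,
        IsStrategy α ∧ BlindStrat α ∧ StronglySync μ0 δ α) ∧
      (∀ β : Hist (Fin n) (Fin m) → Fin m → ℝ,
        IsStrategy β → (∀ h₁ h₂, β h₁ = β h₂) → ¬ StronglySync μ0 δ β) := by
  exact ⟨3, 2, Example3.mu, Example3.dl, Example3.mu_dist, Example3.dl_trans,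
    ⟨Example3.agood, Example3.agood_strategy, Example3.agood_blind, Example3.agood_sync⟩,
    fun β hβ hconst => Example3.no_const β hβ hconst⟩

end SyncMDP
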